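/- In the setting of the discrete p_h(·)-Dirichlet problem, weak duality holds: inf over v_h in the Crouzeix–Raviart space with homogeneous Dirichlet condition of I_h^{cr}(v_h) := ∫_Ω φ_h(·,|∇_h v_h|) dx − ∫_Ω f_h Π_h v_h dx is greater than or equal to sup over y_h in the Raviart–Thomas space with zero normal trace on Γ_N of D_h^{rt}(y_h) := −∫_Ω φ_h*(·,|Π_h y_h|) dx − χ(div y_h = −f_h), where χ(P) = 0 if P holds and +∞ otherwise. -/

import Mathlib

/-!
For an admissible field `y_h` (with `div y_h = -f_h`) and any `v_h`, discrete integration by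
parts turns `∫ f_h Π_h v_h` into `∫ Π_h y_h · ∇_h v_h`, and the Fenchel–Young inequality bounds
this by `∫ φ_h*(|Π_h y_h|) + ∫ φ_h(|∇_h v_h|)`. Rearranged, `D_h^rt(y_h) ≤ I_h^cr(v_h)` for every
such pair.
-/

open MeasureTheory

section

variable {α E : Type*} [MeasurableSpace α] {μ : Measure α}
  [NormedAddCommGroup E] [InnerProductSpace ℝ E]

theorem integral_inner_le_of_fenchelYoung {φ φs : α → ℝ → ℝ}
    (hFY : ∀ᵐ x ∂μ, ∀ a b : E, inner ℝ b a ≤ φs x ‖b‖ + φ x ‖a‖) {u w : α → E}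
    (hφ : Integrable (fun x => φ x ‖u x‖) μ) (hφs : Integrable (fun x => φs x ‖w x‖) μ)
    (hinner : Integrable (fun x => inner ℝ (w x) (u x)) μ) :
    ∫ x, inner ℝ (w x) (u x) ∂μ ≤ (∫ x, φs x ‖w x‖ ∂μ) + ∫ x, φ x ‖u x‖ ∂μ := by
  rw [← integral_add hφs hφ]
  refine integral_mono_ae hinner (hφs.add hφ) ?_
  filter_upwards [hFY] with x hx
  exact hx (u x) (w x)

theorem integral_mul_eq_integral_inner_of_div_eq_neg {p div f : α → ℝ} {u w : α → E}
    (hIBP : ∫ x, inner ℝ (w x) (u x) ∂μ = -∫ x, p x * div x ∂μ)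
    (hdiv : ∀ᵐ x ∂μ, div x = -f x) :
    ∫ x, f x * p x ∂μ = ∫ x, inner ℝ (w x) (u x) ∂μ := by
  rw [hIBP, ← integral_neg]
  refine integral_congr_ae ?_
  filter_upwards [hdiv] with x hx
  rw [hx]
  ring

end

/-- The discrete spaces are given abstractly: `X` indexes the Crouzeix–Raviart functions
(through `gradh v = ∇_h v` and `Pv v = Π_h v`), `Y` the Raviart–Thomas fields (through
`Py y = Π_h y` and `divy y = div y`). The dual functional is `-∞` off the constraint
`div y_h = -f_h`, so its supremum is taken over the constrained fields only. -/
theorem stmt18 {d : ℕ} {α : Type} [MeasurableSpace α] (μ : Measure α)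
    (X Y : Type)
    (gradh : X → α → EuclideanSpace ℝ (Fin d))
    (Pv : X → α → ℝ)
    (Py : Y → α → EuclideanSpace ℝ (Fin d))
    (divy : Y → α → ℝ)
    (fh : α → ℝ)
    (φh φhs : α → ℝ → ℝ)
    (hFY : ∀ᵐ x ∂μ, ∀ a b : EuclideanSpace ℝ (Fin d),
      (inner ℝ b a : ℝ) ≤ φhs x ‖b‖ + φh x ‖a‖)
    (hIBP : ∀ v y, (∫ x, (inner ℝ (Py y x) (gradh v x) : ℝ) ∂μ) =
      - ∫ x, Pv v x * divy y x ∂μ)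
    (hI1 : ∀ v, Integrable (fun x => φh x ‖gradh v x‖) μ)
    (hI3 : ∀ y, Integrable (fun x => φhs x ‖Py y x‖) μ)
    (hI4 : ∀ v y, Integrable (fun x => (inner ℝ (Py y x) (gradh v x) : ℝ)) μ) :
    (⨅ v : X, (((∫ x, φh x ‖gradh v x‖ ∂μ) - ∫ x, fh x * Pv v x ∂μ : ℝ) : EReal)) ≥
      ⨆ y : {y : Y // ∀ᵐ x ∂μ, divy y x = - fh x},
        ((-(∫ x, φhs x ‖Py y.1 x‖ ∂μ) : ℝ) : EReal) := by
  refine iSup_le fun ⟨y, hdiv⟩ => le_iInf fun v => EReal.coe_le_coe_iff.mpr ?_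
  have hsource := integral_mul_eq_integral_inner_of_div_eq_neg (hIBP v y) hdiv
  have hbound := integral_inner_le_of_fenchelYoung hFY (hI1 v) (hI3 y) (hI4 v y)
  linarith
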